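/- arXiv:1607.04374 — 2 statements merged into one kernel-verified Lean document; each statement's English description precedes it below -/
import Mathlib

section
/- Let H be a Hilbert space with closed subspaces H1, H2, H3 and let α ∈ H. If α is orthogonal to H1 + H3 and α is orthogonal to H2 + H3, then α is orthogonal to the closure of H1 + H2 + H3. Consequently, if y ∈ H satisfies P_{H3} y = P_{closure(H1+H3)} y and P_{H3} y = P_{closure(H2+H3)} y, then P_{H3} y = P_{closure(H1+H2+H3)} y. -/
open RealInnerProductSpace

/-! Since `H1 ⊔ H2 ⊔ H3 = (H1 ⊔ H3) ⊔ (H2 ⊔ H3)` and `(K ⊔ L)ᗮ = Kᗮ ⊓ Lᗮ`, a vector orthogonal to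
both joint pasts is orthogonal to their sum, hence to its closure. For the projections, `H3` lies in
each of the closed subspaces, so `P_{H3} y = P_M y` says exactly that the residual `y - P_{H3} y` is
orthogonal to `M`; the first part then moves this orthogonality to the closure of `H1 + H2 + H3`. -/

namespace Submodule

variable {𝕜 E : Type*} [RCLike 𝕜] [NormedAddCommGroup E] [InnerProductSpace 𝕜 E]

theorem mem_orthogonal_topologicalClosure_sup_sup {K₁ K₂ K₃ : Submodule 𝕜 E} {v : E}
    (h₁ : v ∈ (K₁ ⊔ K₃)ᗮ) (h₂ : v ∈ (K₂ ⊔ K₃)ᗮ) : v ∈ (K₁ ⊔ K₂ ⊔ K₃).topologicalClosureᗮ := by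
  rw [orthogonal_closure, sup_sup_distrib_right, ← inf_orthogonal]
  exact ⟨h₁, h₂⟩

theorem starProjection_eq_starProjection_iff_of_le {K M : Submodule 𝕜 E}
    [K.HasOrthogonalProjection] [M.HasOrthogonalProjection] (hKM : K ≤ M) (v : E) :
    K.starProjection v = M.starProjection v ↔ v - K.starProjection v ∈ Mᗮ := by
  refine ⟨fun h ↦ h ▸ M.sub_starProjection_mem_orthogonal v, fun h ↦ ?_⟩
  exact (M.eq_starProjection_of_mem_orthogonal (hKM (K.starProjection_apply_mem v)) h).symm

end Submodule

theorem orthogonal_to_joint_past_general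
    {H : Type*} [NormedAddCommGroup H] [InnerProductSpace ℝ H] [CompleteSpace H]
    (H1 H2 H3 : Submodule ℝ H)
    [CompleteSpace H3] :
    (∀ α : H, (∀ z ∈ H1 ⊔ H3, ⟪α, z⟫ = 0) → (∀ z ∈ H2 ⊔ H3, ⟪α, z⟫ = 0) →
        ∀ z ∈ (H1 ⊔ H2 ⊔ H3).topologicalClosure, ⟪α, z⟫ = 0) ∧
    (∀ y : H,
        (Submodule.orthogonalProjectionOnto H3 y : H) =
          (Submodule.orthogonalProjectionOnto (H1 ⊔ H3).topologicalClosure y : H) →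
        (Submodule.orthogonalProjectionOnto H3 y : H) =
          (Submodule.orthogonalProjectionOnto (H2 ⊔ H3).topologicalClosure y : H) →
        (Submodule.orthogonalProjectionOnto H3 y : H) =
          (Submodule.orthogonalProjectionOnto (H1 ⊔ H2 ⊔ H3).topologicalClosure y : H)) := by
  refine ⟨fun α h₁ h₂ ↦ (Submodule.mem_orthogonal' _ _).1 <|
    Submodule.mem_orthogonal_topologicalClosure_sup_sup ((Submodule.mem_orthogonal' _ _).2 h₁)
      ((Submodule.mem_orthogonal' _ _).2 h₂), fun y hy₁ hy₂ ↦ ?_⟩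
  have hle : ∀ K : Submodule ℝ H, H3 ≤ (K ⊔ H3).topologicalClosure :=
    fun K ↦ le_sup_right.trans (Submodule.le_topologicalClosure _)
  simp only [← Submodule.starProjection_apply] at hy₁ hy₂ ⊢
  rw [Submodule.starProjection_eq_starProjection_iff_of_le (hle _)] at hy₁ hy₂ ⊢
  rw [Submodule.orthogonal_closure] at hy₁ hy₂
  exact Submodule.mem_orthogonal_topologicalClosure_sup_sup hy₁ hy₂

/-- If `α` is orthogonal to `H1 + H3` and to `H2 + H3`, then `α` is orthogonal to
the closure of `H1 + H2 + H3`.  Consequently, if `P_{H3} y` agrees with the projections of `y`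
onto `closure (H1 + H3)` and onto `closure (H2 + H3)`, then it agrees with the projection of
`y` onto `closure (H1 + H2 + H3)`. -/
theorem orthogonal_to_joint_past
    {H : Type*} [NormedAddCommGroup H] [InnerProductSpace ℝ H] [CompleteSpace H]
    (H1 H2 H3 : Submodule ℝ H)
    (h1 : IsClosed (H1 : Set H)) (h2 : IsClosed (H2 : Set H)) (h3 : IsClosed (H3 : Set H))
    [CompleteSpace H3] :
    (∀ α : H, (∀ z ∈ H1 ⊔ H3, ⟪α, z⟫ = 0) → (∀ z ∈ H2 ⊔ H3, ⟪α, z⟫ = 0) →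
        ∀ z ∈ (H1 ⊔ H2 ⊔ H3).topologicalClosure, ⟪α, z⟫ = 0) ∧
    (∀ y : H,
        (Submodule.orthogonalProjectionOnto H3 y : H) =
          (Submodule.orthogonalProjectionOnto (H1 ⊔ H3).topologicalClosure y : H) →
        (Submodule.orthogonalProjectionOnto H3 y : H) =
          (Submodule.orthogonalProjectionOnto (H2 ⊔ H3).topologicalClosure y : H) →
        (Submodule.orthogonalProjectionOnto H3 y : H) =
          (Submodule.orthogonalProjectionOnto (H1 ⊔ H2 ⊔ H3).topologicalClosure y : H)) :=
  orthogonal_to_joint_past_general H1 H2 H3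
end

section
/- Suppose A1, …, An are square matrices and C1, …, Cn are matrices such that each pair (Ci, Ai) is observable. Let A be the block matrix with diagonal blocks A1, …, A_{n−1}, last column blocks A_{1,n}, …, A_{n−1,n}, A_{n,n} = An, and zeros elsewhere (coordinated form), and let C have the same zero pattern with diagonal blocks Ci and last column blocks C_{i,n}. If for every i the pair ([[A_{i,i}, A_{i,n}],[0, A_{n,n}]], [[C_{i,i}, C_{i,n}],[0, C_{n,n}]]) is observable, then (C, A) is observable. -/
/-- `(C, A)` is an observable pair: only the zero vector is annihilated by all `C A^k`. -/
def Observable {p n : Type*} [Fintype p] [Fintype n] [DecidableEq n]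
    (C : Matrix p n ℝ) (A : Matrix n n ℝ) : Prop :=
  ∀ x : n → ℝ, (∀ k : ℕ, (C * A ^ k).mulVec x = 0) → x = 0

lemma aux_sum_restrict {β δ : Type*} [Fintype β] [Fintype δ] [DecidableEq β] (f : δ → β)
    (hf : Function.Injective f) (g : β → ℝ) (h0 : ∀ v, (∀ w, f w ≠ v) → g v = 0) :
    ∑ v, g v = ∑ w, g (f w) := by
  rw [← Finset.sum_image (fun x _ y _ h => hf h)]
  refine (Finset.sum_subset (Finset.subset_univ _) ?_).symm
  intro v _ hv
  refine h0 v fun w hw => hv ?_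
  simp [← hw]

lemma restrict_mulVec {α β γ δ : Type*} [Fintype α] [Fintype β] [Fintype γ] [Fintype δ]
    [DecidableEq β]
    (M : Matrix α β ℝ) (e : γ → α) (f : δ → β) (hf : Function.Injective f)
    (h0 : ∀ (u : γ) (v : β), (∀ w, f w ≠ v) → M (e u) v = 0) (x : β → ℝ) :
    (M.mulVec x) ∘ e = (M.submatrix e f).mulVec (x ∘ f) := by
  funext u
  simp only [Function.comp, Matrix.mulVec, dotProduct, Matrix.submatrix_apply]
  exact aux_sum_restrict f hf _ (fun v hv => by rw [h0 u v hv, zero_mul])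

lemma restrict_pow_mulVec {β γ : Type*} [Fintype β] [Fintype γ] [DecidableEq β] [DecidableEq γ]
    (A : Matrix β β ℝ) (e : γ → β) (he : Function.Injective e)
    (h0 : ∀ (u : γ) (v : β), (∀ w, e w ≠ v) → A (e u) v = 0) (k : ℕ) :
    ∀ x : β → ℝ, ((A ^ k).mulVec x) ∘ e = ((A.submatrix e e) ^ k).mulVec (x ∘ e) := by
  induction k with
  | zero => intro x; simp [Matrix.one_mulVec]
  | succ k ih =>
      intro x
      rw [pow_succ, pow_succ, ← Matrix.mulVec_mulVec, ← Matrix.mulVec_mulVec]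
      rw [ih (A.mulVec x), restrict_mulVec A e e he h0 x]

/-- For `A`, `C` in coordinated form (block diagonal agent blocks, a last block
column, zero last block row except the `(n,n)` block), if every diagonal pair `(C_{i,i}, A_{i,i})`
and `(C_{n,n}, A_{n,n})` is observable and every agent–coordinator pair
`([[C_{i,i}, C_{i,n}],[0, C_{n,n}]], [[A_{i,i}, A_{i,n}],[0, A_{n,n}]])` is observable,
then `(C, A)` is observable. -/
theorem coordinated_observable {m : ℕ} (d c : Fin m → ℕ) (dn cn : ℕ)
    (A : Matrix ((Σ i : Fin m, Fin (d i)) ⊕ Fin dn) ((Σ i : Fin m, Fin (d i)) ⊕ Fin dn) ℝ)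
    (C : Matrix ((Σ i : Fin m, Fin (c i)) ⊕ Fin cn) ((Σ i : Fin m, Fin (d i)) ⊕ Fin dn) ℝ)
    -- coordinated zero structure of A
    (hAoff : ∀ (i j : Fin m) (a : Fin (d i)) (b : Fin (d j)), i ≠ j →
      A (Sum.inl ⟨i, a⟩) (Sum.inl ⟨j, b⟩) = 0)
    (hArow : ∀ (b : Fin dn) (j : Fin m) (a : Fin (d j)), A (Sum.inr b) (Sum.inl ⟨j, a⟩) = 0)
    -- coordinated zero structure of C
    (hCoff : ∀ (i j : Fin m) (a : Fin (c i)) (b : Fin (d j)), i ≠ j →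
      C (Sum.inl ⟨i, a⟩) (Sum.inl ⟨j, b⟩) = 0)
    (hCrow : ∀ (b : Fin cn) (j : Fin m) (a : Fin (d j)), C (Sum.inr b) (Sum.inl ⟨j, a⟩) = 0)
    -- each diagonal pair is observable
    (hdiag : ∀ i : Fin m,
      Observable (C.submatrix (fun a : Fin (c i) => Sum.inl ⟨i, a⟩)
          (fun b : Fin (d i) => Sum.inl ⟨i, b⟩))
        (A.submatrix (fun a : Fin (d i) => Sum.inl ⟨i, a⟩)
          (fun b : Fin (d i) => Sum.inl ⟨i, b⟩)))
    (hcoord : Observable (C.submatrix (Sum.inr : Fin cn → _) (Sum.inr : Fin dn → _))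
        (A.submatrix (Sum.inr : Fin dn → _) (Sum.inr : Fin dn → _)))
    -- each agent–coordinator subsystem pair is observable
    (hsub : ∀ i : Fin m,
      Observable
        (C.submatrix
          (Sum.elim (fun a : Fin (c i) => Sum.inl ⟨i, a⟩) (fun b : Fin cn => Sum.inr b))
          (Sum.elim (fun a : Fin (d i) => Sum.inl ⟨i, a⟩) (fun b : Fin dn => Sum.inr b)))
        (A.submatrix
          (Sum.elim (fun a : Fin (d i) => Sum.inl ⟨i, a⟩) (fun b : Fin dn => Sum.inr b))
          (Sum.elim (fun a : Fin (d i) => Sum.inl ⟨i, a⟩) (fun b : Fin dn => Sum.inr b)))) :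
    Observable C A := by
  intro x hx
  -- coordinator part
  have hcoordA : ∀ (u : Fin dn) (v : (Σ i : Fin m, Fin (d i)) ⊕ Fin dn),
      (∀ w : Fin dn, Sum.inr w ≠ v) → A (Sum.inr u) v = 0 := by
    rintro u (⟨j, a⟩ | b) hv
    · exact hArow u j a
    · exact absurd rfl (hv b)
  have hinr : Function.Injective (Sum.inr : Fin dn → (Σ i : Fin m, Fin (d i)) ⊕ Fin dn) :=
    Sum.inr_injective
  have hxn : x ∘ Sum.inr = 0 := by
    apply hcoord
    intro k
    have h1 := restrict_pow_mulVec A Sum.inr hinr hcoordA k x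
    have h2 := restrict_mulVec C (Sum.inr : Fin cn → _) (Sum.inr : Fin dn → _) hinr
      (by rintro u (⟨j, a⟩ | b) hv
          · exact hCrow u j a
          · exact absurd rfl (hv b)) ((A ^ k).mulVec x)
    rw [← Matrix.mulVec_mulVec, ← h1, ← h2]
    have := hx k
    rw [← Matrix.mulVec_mulVec] at this
    rw [this]
    rfl
  -- agent parts
  have hagent : ∀ i : Fin m, x ∘ (Sum.elim (fun a : Fin (d i) => Sum.inl ⟨i, a⟩)
      (fun b : Fin dn => Sum.inr b)) = 0 := by
    intro i
    set e := Sum.elim (fun a : Fin (d i) => (Sum.inl ⟨i, a⟩ : (Σ j : Fin m, Fin (d j)) ⊕ Fin dn))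
      (fun b : Fin dn => Sum.inr b) with he_def
    set r := Sum.elim (fun a : Fin (c i) => (Sum.inl ⟨i, a⟩ : (Σ j : Fin m, Fin (c j)) ⊕ Fin cn))
      (fun b : Fin cn => Sum.inr b) with hr_def
    have he : Function.Injective e := by
      rintro (a | b) (a' | b') h <;> simp [he_def] at h <;> simp [h]
    have hA0 : ∀ (u : Fin (d i) ⊕ Fin dn) (v : (Σ j : Fin m, Fin (d j)) ⊕ Fin dn),
        (∀ w, e w ≠ v) → A (e u) v = 0 := by
      rintro (a | b) (⟨j, a'⟩ | b') hv
      · rcases eq_or_ne i j with rfl | hij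
        · exact absurd rfl (hv (Sum.inl a'))
        · exact hAoff i j a a' hij
      · exact absurd rfl (hv (Sum.inr b'))
      · exact hArow b j a'
      · exact absurd rfl (hv (Sum.inr b'))
    have hC0 : ∀ (u : Fin (c i) ⊕ Fin cn) (v : (Σ j : Fin m, Fin (d j)) ⊕ Fin dn),
        (∀ w, e w ≠ v) → C (r u) v = 0 := by
      rintro (a | b) (⟨j, a'⟩ | b') hv
      · rcases eq_or_ne i j with rfl | hij
        · exact absurd rfl (hv (Sum.inl a'))
        · exact hCoff i j a a' hij
      · exact absurd rfl (hv (Sum.inr b'))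
      · exact hCrow b j a'
      · exact absurd rfl (hv (Sum.inr b'))
    apply hsub i
    intro k
    have h1 := restrict_pow_mulVec A e he hA0 k x
    have h2 := restrict_mulVec C r e he hC0 ((A ^ k).mulVec x)
    rw [← Matrix.mulVec_mulVec, ← h1, ← h2]
    have := hx k
    rw [← Matrix.mulVec_mulVec] at this
    rw [this]
    rfl
  funext u
  rcases u with ⟨i, a⟩ | b
  · exact congrFun (hagent i) (Sum.inl a)
  · exact congrFun hxn b
end
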